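/- College preferences compare the SOSM unfavorably to any stable matching, studentwise: for any stable matching μ and any college j, every student in μ⁻¹(j) \ μ*⁻¹(j, u) is strictly preferred by j to every student in μ*⁻¹(j, u) \ μ⁻¹(j), where μ* is the student-optimal stable matching. -/

import Mathlib

attribute [local instance] Classical.propDecidable

noncomputable section

/-- A many-to-one college admissions market (college admissions model) with `n`
students and `m` colleges.  Strict preferences are encoded by injective rank
functions (a smaller rank means more preferred); `none` is the outside option
`0` (being unmatched / an unfilled position). -/
structure Market (n m : ℕ) where
  quota : Fin m → ℕ
  sRank : Fin n → Option (Fin m) → ℕ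
  sRank_inj : ∀ i, Function.Injective (sRank i)
  cRank : Fin m → Option (Fin n) → ℕ
  cRank_inj : ∀ j, Function.Injective (cRank j)

namespace Market

variable {n m : ℕ}

/-- Student `i` strictly prefers `a` to `b`. -/
def sPref (M : Market n m) (i : Fin n) (a b : Option (Fin m)) : Prop :=
  M.sRank i a < M.sRank i b

/-- College `j` strictly prefers `a` to `b`. -/
def cPref (M : Market n m) (j : Fin m) (a b : Option (Fin n)) : Prop :=
  M.cRank j a < M.cRank j b

/-- The set `μ⁻¹(j)` of students matched to college `j` under `μ`. -/
def assigned (M : Market n m) (μ : Fin n → Option (Fin m)) (j : Fin m) : Finset (Fin n) :=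
  Finset.univ.filter fun i => μ i = some j

/-- `μ` is a (capacity-feasible) matching: `|μ⁻¹(j)| ≤ q_j` for every college. -/
def IsMatching (M : Market n m) (μ : Fin n → Option (Fin m)) : Prop :=
  ∀ j, (M.assigned μ j).card ≤ M.quota j

/-- Individual rationality of `μ`. -/
def IndRational (M : Market n m) (μ : Fin n → Option (Fin m)) : Prop :=
  (∀ i, ¬ M.sPref i none (μ i)) ∧
  (∀ j i', μ i' = some j → ¬ M.cPref j none (some i'))

/-- `(i, j)` is a blocking pair for `μ`. -/
def Blocks (M : Market n m) (μ : Fin n → Option (Fin m)) (i : Fin n) (j : Fin m) : Prop :=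
  M.sPref i (some j) (μ i) ∧
  (((M.assigned μ j).card < M.quota j ∧ M.cPref j (some i) none) ∨
   ((M.assigned μ j).card = M.quota j ∧ ∃ i' ∈ M.assigned μ j, M.cPref j (some i) (some i')))

/-- `μ` is stable: individually rational with no blocking pair. -/
def Stable (M : Market n m) (μ : Fin n → Option (Fin m)) : Prop :=
  M.IndRational μ ∧ ∀ i j, ¬ M.Blocks μ i j

/-- `μ` is envy-free: individually rational and any blocking pair involves an
unmatched student. -/
def EnvyFree (M : Market n m) (μ : Fin n → Option (Fin m)) : Prop :=
  M.IndRational μ ∧ ∀ i j, M.Blocks μ i j → μ i = none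

/-- `μ` is 1-envy-free: envy-free, and either stable or there is one and only
one student who belongs to every blocking pair. -/
def OneEnvyFree (M : Market n m) (μ : Fin n → Option (Fin m)) : Prop :=
  M.EnvyFree μ ∧ (M.Stable μ ∨ ∃! i : Fin n, ∀ i' j, M.Blocks μ i' j → i' = i)

/-- `(i, j)` is a student-maximal blocking pair: `j` is `i`'s most preferred
college among those with whom `i` forms a blocking pair. -/
def StudentMaxBlock (M : Market n m) (μ : Fin n → Option (Fin m)) (i : Fin n) (j : Fin m) :
    Prop :=
  M.Blocks μ i j ∧ ∀ j', M.Blocks μ i j' → M.sRank i (some j) ≤ M.sRank i (some j')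

/-- `T` is the re-stabilization operator: on a 1-envy-free matching with no
blocking pair it is the identity; otherwise it satisfies the unique
student-maximal blocking pair `(i, j)`, matching `i` to `j`, keeping everyone
not matched to `j` unchanged, keeping the students of `j` if `j` has a vacancy
or if they are not `j`'s worst current student, and unmatching `j`'s worst
current student otherwise. -/
def IsTStep (M : Market n m) (T : (Fin n → Option (Fin m)) → Fin n → Option (Fin m)) : Prop :=
  ∀ μ, M.IsMatching μ → M.OneEnvyFree μ →
    ((∀ i j, ¬ M.Blocks μ i j) → T μ = μ) ∧
    ∀ i j, M.StudentMaxBlock μ i j →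
      T μ i = some j ∧
      ∀ i', i' ≠ i →
        (μ i' ≠ some j → T μ i' = μ i') ∧
        (μ i' = some j →
          ((M.assigned μ j).card < M.quota j → T μ i' = μ i') ∧
          ((M.assigned μ j).card = M.quota j →
            ((∃ i'' ∈ M.assigned μ j, M.cPref j (some i') (some i'')) → T μ i' = μ i') ∧
            ((∀ i'' ∈ M.assigned μ j, i'' ≠ i' → M.cPref j (some i'') (some i')) →
              T μ i' = none)))

/-- `Tstar` iterates `T` finitely many times from any 1-envy-free matching
until a fixed point of `T` is reached. -/
def IsTStarOf (M : Market n m) (T Tstar : (Fin n → Option (Fin m)) → Fin n → Option (Fin m)) :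
    Prop :=
  ∀ μ, M.IsMatching μ → M.OneEnvyFree μ →
    ∃ r : ℕ, Tstar μ = T^[r] μ ∧ T (Tstar μ) = Tstar μ

/-- A one-step responsive improvement for college `j`: `A` is obtained from `B`
either by filling a vacancy with an acceptable student, or by swapping a
student of `B` for a strictly preferred outside student. -/
def SwapImproves (M : Market n m) (j : Fin m) (A B : Finset (Fin n)) : Prop :=
  (∃ i₁, i₁ ∉ B ∧ A = insert i₁ B ∧ M.cPref j (some i₁) none) ∨
  (∃ i₁ i₂, i₂ ∈ B ∧ i₁ ∉ B ∧ A = insert i₁ (B.erase i₂) ∧ M.cPref j (some i₁) (some i₂))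

/-- The responsive extension of college `j`'s strict preference to sets of
students: the transitive closure of one-step responsive improvements. -/
def SetPref (M : Market n m) (j : Fin m) (A B : Finset (Fin n)) : Prop :=
  Relation.TransGen (M.SwapImproves j) A B

/-- `μ₁ ≿ μ₂`: every college either gets the same set of students or a
strictly (responsively) preferred set. -/
def CollegesWeakPref (M : Market n m) (μ₁ μ₂ : Fin n → Option (Fin m)) : Prop :=
  ∀ j, M.assigned μ₁ j = M.assigned μ₂ j ∨ M.SetPref j (M.assigned μ₁ j) (M.assigned μ₂ j)

/-- `μ` is the student-optimal stable matching: a stable matching that every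
student weakly prefers to any other stable matching. -/
def IsSOSM (M : Market n m) (μ : Fin n → Option (Fin m)) : Prop :=
  M.IsMatching μ ∧ M.Stable μ ∧
    ∀ μ', M.IsMatching μ' → M.Stable μ' → ∀ i, M.sRank i (μ i) ≤ M.sRank i (μ' i)

/-- `μ` (with student `i` unmatched) is a stable matching of the market in
which student `i` has been removed. -/
def StableAway (M : Market n m) (i : Fin n) (μ : Fin n → Option (Fin m)) : Prop :=
  μ i = none ∧
  (∀ i', i' ≠ i → ¬ M.sPref i' none (μ i')) ∧
  (∀ j i', i' ≠ i → μ i' = some j → ¬ M.cPref j none (some i')) ∧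
  (∀ i' j, i' ≠ i → ¬ M.Blocks μ i' j)

/-- `μ` (with student `i` unmatched) is the student-optimal stable matching of
the market in which student `i` has been removed. -/
def IsSOSMAway (M : Market n m) (i : Fin n) (μ : Fin n → Option (Fin m)) : Prop :=
  M.IsMatching μ ∧ M.StableAway i μ ∧
    ∀ μ', M.IsMatching μ' → M.StableAway i μ' →
      ∀ i', i' ≠ i → M.sRank i' (μ i') ≤ M.sRank i' (μ' i')

/-- The maximum rank difference `h(w)` among the colleges' preferences: the
largest rank gap `|w_j(i₁) − w_j(i₂)|` over colleges `j` and pairs `(i₁, i₂)`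
on whose relative ranking at least two colleges disagree (`0` if there is no
disagreement). -/
def maxRankDiff (M : Market n m) : ℕ :=
  Finset.univ.sup fun j : Fin m =>
    (Finset.univ.filter fun q : Option (Fin n) × Option (Fin n) =>
        ∃ j₁ j₂ : Fin m, M.cPref j₁ q.1 q.2 ∧ M.cPref j₂ q.2 q.1).sup
      fun q => ((M.cRank j q.1 : ℤ) - (M.cRank j q.2 : ℤ)).natAbs

/-- `N*_{j,1}(μ) = μ⁻¹(j) \ μ*⁻¹(j)` : students of `j` under `μ` but not `μs`. -/
def Nset1 (M : Market n m) (μ μs : Fin n → Option (Fin m)) (j : Fin m) : Finset (Fin n) :=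
  M.assigned μ j \ M.assigned μs j

/-- `N*_{j,0}(μ) = μ*⁻¹(j) \ μ⁻¹(j)` : students of `j` under `μs` but not `μ`. -/
def Nset0 (M : Market n m) (μ μs : Fin n → Option (Fin m)) (j : Fin m) : Finset (Fin n) :=
  M.assigned μs j \ M.assigned μ j

/-- The rank `r_{j,i}(A)` of student `i` within the set `A` according to `≻_j`. -/
def rankIn (M : Market n m) (j : Fin m) (i : Fin n) (A : Finset (Fin n)) : ℕ :=
  (A.filter fun i' => M.cPref j (some i') (some i)).card + 1

/-- `a ▷_j b`: student `a` displaces student `b` from college `j` (as we move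
from the SOSM `μs` to the stable matching `μ`). -/
def Displaces (M : Market n m) (μ μs : Fin n → Option (Fin m)) (j : Fin m) (a b : Fin n) :
    Prop :=
  a ∈ M.Nset1 μ μs j ∧ b ∈ M.Nset0 μ μs j ∧
    M.rankIn j a (M.Nset1 μ μs j) = M.rankIn j b (M.Nset0 μ μs j)

/-- `a ▷ b`: `a` displaces `b` from some college. -/
def DisplacesAny (M : Market n m) (μ μs : Fin n → Option (Fin m)) (a b : Fin n) : Prop :=
  ∃ j, M.Displaces μ μs j a b

/-- The positions of the related one-to-one market: college `j` is split into
`q_j` ordered positions. -/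
abbrev Position (M : Market n m) : Type := (j : Fin m) × Fin (M.quota j)

/-- Student `i`'s strict preference over positions in the related one-to-one
market: positions of strictly better colleges are better, and within a college
a smaller index is better. -/
def PosBetter (M : Market n m) (i : Fin n) :
    Option (Position M) → Option (Position M) → Prop
  | some q, some q' =>
      M.sRank i (some q.1) < M.sRank i (some q'.1) ∨ (q.1 = q'.1 ∧ (q.2 : ℕ) < (q'.2 : ℕ))
  | some q, none => M.sRank i (some q.1) < M.sRank i none
  | none, some q' => M.sRank i none < M.sRank i (some q'.1)
  | none, none => False

/-- `(μN, μM)` is the one-to-one matching of the related market corresponding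
to the many-to-one matching `μ`: the students of `μ⁻¹(j)` occupy, in the order
of college `j`'s preference, the ordered positions of `j`. -/
def Corresponds (M : Market n m) (μ : Fin n → Option (Fin m))
    (μN : Fin n → Option (Position M)) (μM : Position M → Option (Fin n)) : Prop :=
  (∀ i p, μN i = some p ↔ μM p = some i) ∧
  (∀ i j, (∃ s, μN i = some ⟨j, s⟩) ↔ μ i = some j) ∧
  (∀ i j (s : Fin (M.quota j)), μN i = some ⟨j, s⟩ →
    (s : ℕ) = ((M.assigned μ j).filter fun i' => M.cPref j (some i') (some i)).card)

/-- `(i, p)` is a blocking pair in the related one-to-one market. -/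
def PosBlocks (M : Market n m) (μN : Fin n → Option (Position M))
    (μM : Position M → Option (Fin n)) (i : Fin n) (p : Position M) : Prop :=
  M.PosBetter i (some p) (μN i) ∧ M.cPref p.1 (some i) (μM p)

/-- Individual rationality in the related one-to-one market. -/
def PosIR (M : Market n m) (μN : Fin n → Option (Position M))
    (μM : Position M → Option (Fin n)) : Prop :=
  (∀ i, ¬ M.PosBetter i none (μN i)) ∧ (∀ p : Position M, ¬ M.cPref p.1 none (μM p))

/-- Stability in the related one-to-one market. -/
def PosStable (M : Market n m) (μN : Fin n → Option (Position M))
    (μM : Position M → Option (Fin n)) : Prop :=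
  M.PosIR μN μM ∧ ∀ i p, ¬ M.PosBlocks μN μM i p

/-- Simplicity in the related one-to-one market: individually rational and any
blocking pair involves an unmatched student. -/
def PosSimple (M : Market n m) (μN : Fin n → Option (Position M))
    (μM : Position M → Option (Fin n)) : Prop :=
  M.PosIR μN μM ∧ ∀ i p, M.PosBlocks μN μM i p → μN i = none

/-- 1-simplicity in the related one-to-one market: simple, and either stable or
there is one and only one student belonging to every blocking pair. -/
def PosOneSimple (M : Market n m) (μN : Fin n → Option (Position M))
    (μM : Position M → Option (Fin n)) : Prop :=
  M.PosSimple μN μM ∧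
    (M.PosStable μN μM ∨ ∃! i : Fin n, ∀ i' p, M.PosBlocks μN μM i' p → i' = i)

end Market

/-- A generic one-to-one matching market with `n` students and `p` positions,
with strict preferences encoded by injective rank functions. -/
structure OOMarket (n p : ℕ) where
  sRank : Fin n → Option (Fin p) → ℕ
  sRank_inj : ∀ i, Function.Injective (sRank i)
  pRank : Fin p → Option (Fin n) → ℕ
  pRank_inj : ∀ c, Function.Injective (pRank c)

namespace OOMarket

variable {n p : ℕ}

/-- `(μN, μM)` is a one-to-one matching. -/
def IsOOMatching (O : OOMarket n p) (μN : Fin n → Option (Fin p))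
    (μM : Fin p → Option (Fin n)) : Prop :=
  ∀ i c, μN i = some c ↔ μM c = some i

/-- `(i, c)` is a blocking pair for `(μN, μM)`. -/
def OOBlocks (O : OOMarket n p) (μN : Fin n → Option (Fin p))
    (μM : Fin p → Option (Fin n)) (i : Fin n) (c : Fin p) : Prop :=
  O.sRank i (some c) < O.sRank i (μN i) ∧ O.pRank c (some i) < O.pRank c (μM c)

/-- Individual rationality. -/
def OOIR (O : OOMarket n p) (μN : Fin n → Option (Fin p))
    (μM : Fin p → Option (Fin n)) : Prop :=
  (∀ i, ¬ O.sRank i none < O.sRank i (μN i)) ∧ (∀ c, ¬ O.pRank c none < O.pRank c (μM c))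

/-- Stability. -/
def OOStable (O : OOMarket n p) (μN : Fin n → Option (Fin p))
    (μM : Fin p → Option (Fin n)) : Prop :=
  O.OOIR μN μM ∧ ∀ i c, ¬ O.OOBlocks μN μM i c

/-- Simplicity: individually rational and every blocking pair involves an
unmatched student. -/
def OOSimple (O : OOMarket n p) (μN : Fin n → Option (Fin p))
    (μM : Fin p → Option (Fin n)) : Prop :=
  O.OOIR μN μM ∧ ∀ i c, O.OOBlocks μN μM i c → μN i = none

/-- 1-simplicity: simple, and either stable or there is one and only one
student belonging to every blocking pair. -/
def OOOneSimple (O : OOMarket n p) (μN : Fin n → Option (Fin p))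
    (μM : Fin p → Option (Fin n)) : Prop :=
  O.OOSimple μN μM ∧
    (O.OOStable μN μM ∨ ∃! i : Fin n, ∀ i' c, O.OOBlocks μN μM i' c → i' = i)

end OOMarket

end

/-!
A student `b` who leaves college `j` when passing from the student-optimal stable matching `μ*`
to a stable matching `μ` strictly prefers `j` to `μ b` by student optimality, and is acceptable
to `j` by individual rationality of `μ*`. So if `j` preferred `b` to one of its students under
`μ`, the pair `(b, j)` would block `μ`.
-/

namespace Market

variable {n m : ℕ} {M : Market n m}

@[simp]
theorem mem_assigned {μ : Fin n → Option (Fin m)} {j : Fin m} {i : Fin n} :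
    i ∈ M.assigned μ j ↔ μ i = some j := by
  simp [assigned]

theorem cPref_of_not_cPref {j : Fin m} {a b : Option (Fin n)} (hab : a ≠ b)
    (h : ¬ M.cPref j a b) : M.cPref j b a :=
  lt_of_le_of_ne (not_lt.mp h) fun heq => hab (M.cRank_inj j heq).symm

theorem IndRational.cPref_some_none {μ : Fin n → Option (Fin m)} (hμ : M.IndRational μ)
    {i : Fin n} {j : Fin m} (hi : μ i = some j) : M.cPref j (some i) none :=
  cPref_of_not_cPref (Option.some_ne_none i).symm (hμ.2 j i hi)

theorem IsSOSM.sPref_of_ne {μ μs : Fin n → Option (Fin m)} (hs : M.IsSOSM μs)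
    (hμ : M.IsMatching μ) (hst : M.Stable μ) {i : Fin n} (hne : μ i ≠ μs i) :
    M.sPref i (μs i) (μ i) :=
  lt_of_le_of_ne (hs.2.2 μ hμ hst i) fun heq => hne (M.sRank_inj i heq).symm

theorem Stable.cPref_of_mem_assigned {μ : Fin n → Option (Fin m)} (hμ : M.IsMatching μ)
    (hst : M.Stable μ) {a b : Fin n} {j : Fin m} (ha : a ∈ M.assigned μ j)
    (hb_envy : M.sPref b (some j) (μ b)) (hb_acc : M.cPref j (some b) none) :
    M.cPref j (some a) (some b) := by
  have hab : a ≠ b := by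
    rintro rfl
    rw [mem_assigned.1 ha] at hb_envy
    exact lt_irrefl _ hb_envy
  by_contra hnot
  have hba := cPref_of_not_cPref (Option.some_injective _ |>.ne hab) hnot
  refine hst.2 b j ⟨hb_envy, ?_⟩
  rcases (hμ j).lt_or_eq with hlt | heq
  · exact Or.inl ⟨hlt, hb_acc⟩
  · exact Or.inr ⟨heq, a, ha, hba⟩

end Market

/-- for any stable matching `μ` and college `j`, every student in
`μ⁻¹(j) \ μ*⁻¹(j)` is strictly preferred by `j` to every student in
`μ*⁻¹(j) \ μ⁻¹(j)`, where `μ*` is the SOSM. -/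
theorem new_students_better_than_departed {n m : ℕ} (M : Market n m)
    (μ μs : Fin n → Option (Fin m))
    (hμ : M.IsMatching μ) (hst : M.Stable μ) (hs : M.IsSOSM μs) :
    ∀ (j : Fin m) (a b : Fin n),
      a ∈ M.Nset1 μ μs j → b ∈ M.Nset0 μ μs j → M.cPref j (some a) (some b) := by
  intro j a b ha hb
  simp only [Market.Nset1, Market.Nset0, Finset.mem_sdiff, Market.mem_assigned] at ha hb
  obtain ⟨hb_s, hb_not⟩ := hb
  have hb_envy : M.sPref b (some j) (μ b) := by
    rw [← hb_s]
    exact hs.sPref_of_ne hμ hst (by rwa [hb_s])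
  exact hst.cPref_of_mem_assigned hμ (Market.mem_assigned.2 ha.1) hb_envy
    (hs.2.1.1.cPref_some_none hb_s)
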